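/- arXiv:2106.14499 — 6 statements merged into one kernel-verified Lean document; each statement's English description precedes it below -/
import Mathlib

section
/- Let R be a discrete valuation ring with uniformiser π, and let N ⊆ M be R-modules such that M/πM is finitely generated, M/N is finitely generated and torsion-free, and π^r N = 0 for some positive integer r. Then M is finitely generated. -/
/-- If `R` is a DVR with uniformiser `π`, `N ⊆ M` are `R`-modules with `M/πM` finitely
generated, `M/N` finitely generated and torsion-free, and `π^r N = 0`, then `M` is
finitely generated. -/
theorem stmt1 {R : Type*} [CommRing R] [IsDomain R] [IsDiscreteValuationRing R]
    {M : Type*} [AddCommGroup M] [Module R M]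
    (π : R) (hπ : Irreducible π)
    (N : Submodule R M)
    (h1 : Module.Finite R (M ⧸ (Ideal.span {π} • (⊤ : Submodule R M))))
    (h2 : Module.Finite R (M ⧸ N))
    (h3 : NoZeroSMulDivisors R (M ⧸ N))
    (r : ℕ) (hr : 0 < r) (h4 : ∀ x ∈ N, (π ^ r) • x = 0) :
    Module.Finite R M := by
  classical
  set I : Ideal R := Ideal.span {π} with hI
  set K : Submodule R M := I • (⊤ : Submodule R M) with hK
  -- M/N is free, hence projective, hence the quotient map splits
  haveI : Module.Free R (M ⧸ N) := Module.free_of_finite_type_torsion_free'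
  obtain ⟨s, hs⟩ := Module.projective_lifting_property N.mkQ (LinearMap.id : (M ⧸ N) →ₗ[R] (M ⧸ N))
    (Submodule.mkQ_surjective N)
  -- the retraction p onto N
  set p : M →ₗ[R] M := LinearMap.id - s ∘ₗ N.mkQ with hp
  have hpN : ∀ x, p x ∈ N := by
    intro x
    have : N.mkQ (p x) = 0 := by
      simp only [hp, LinearMap.sub_apply, LinearMap.id_apply, LinearMap.comp_apply, map_sub]
      have := congrArg (fun f => f (N.mkQ x)) hs
      simp only [LinearMap.comp_apply, LinearMap.id_apply] at this
      rw [this, sub_self]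
    simpa using (Submodule.Quotient.mk_eq_zero N).mp this
  have hpfix : ∀ x ∈ N, p x = x := by
    intro x hx
    simp only [hp, LinearMap.sub_apply, LinearMap.id_apply, LinearMap.comp_apply]
    have : N.mkQ x = 0 := (Submodule.Quotient.mk_eq_zero N).mpr hx
    rw [this, map_zero, sub_zero]
  have hrange : Submodule.map p ⊤ = N := by
    apply le_antisymm
    · rintro y ⟨x, -, rfl⟩
      exact hpN x
    · intro x hx
      exact ⟨x, trivial, hpfix x hx⟩
  -- finite generating set for M modulo K
  obtain ⟨S, hS⟩ := Module.finite_def.mp (by rw [hK]; exact h1 : Module.Finite R (M ⧸ K))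
  set f : (M ⧸ K) → M := Function.surjInv (Submodule.mkQ_surjective K) with hf
  have hfmk : ∀ y, K.mkQ (f y) = y :=
    fun y => Function.surjInv_eq (Submodule.mkQ_surjective K) y
  set T : Finset M := S.image f with hT
  have hsup : Submodule.span R (T : Set M) ⊔ K = ⊤ := by
    have hmap : Submodule.map K.mkQ (Submodule.span R (T : Set M)) = ⊤ := by
      rw [Submodule.map_span]
      rw [← hS]
      congr 1
      ext y
      constructor
      · rintro ⟨x, hx, rfl⟩
        simp only [hT, Finset.coe_image] at hx
        obtain ⟨z, hz, rfl⟩ := hx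
        rw [hfmk]; exact hz
      · intro hy
        exact ⟨f y, by simp [hT]; exact ⟨y, hy, rfl⟩, hfmk y⟩
    have := congrArg (Submodule.comap K.mkQ) hmap
    rw [Submodule.comap_map_mkQ, Submodule.comap_top] at this
    rw [sup_comm] at this
    exact this
  set A : Submodule R M := Submodule.span R (p '' (T : Set M)) with hA
  have hAN : A ≤ N := by
    rw [hA, Submodule.span_le]
    rintro y ⟨x, -, rfl⟩
    exact hpN x
  -- key equation N = A ⊔ I • N
  have hKmap : Submodule.map p K = I • N := by
    rw [hK, Submodule.map_smul'', hrange]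
  have key : N = A ⊔ I • N := by
    conv_lhs => rw [← hrange, ← hsup]
    rw [Submodule.map_sup, Submodule.map_span, hKmap]
  -- iterate: N ≤ A ⊔ I^(k+1) • N
  have iter : ∀ k : ℕ, N ≤ A ⊔ I ^ (k + 1) • N := by
    intro k
    induction k with
    | zero => rw [pow_one]; exact key.le
    | succ k ih =>
      calc N ≤ A ⊔ I • N := key.le
        _ ≤ A ⊔ I • (A ⊔ I ^ (k + 1) • N) :=
            sup_le_sup_left (Submodule.smul_mono le_rfl ih) A
        _ = A ⊔ (I • A ⊔ I ^ (k + 2) • N) := by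
            rw [Submodule.smul_sup, ← Submodule.smul_assoc, smul_eq_mul, ← pow_succ']
        _ ≤ A ⊔ (A ⊔ I ^ (k + 2) • N) :=
            sup_le_sup_left (sup_le_sup_right Submodule.smul_le_right _) A
        _ = A ⊔ I ^ (k + 2) • N := by rw [← sup_assoc, sup_idem]
  have hIr : I ^ r • N = ⊥ := by
    rw [eq_bot_iff]
    apply Submodule.smul_le.mpr
    intro a ha n hn
    rw [hI, Ideal.span_singleton_pow, Ideal.mem_span_singleton] at ha
    obtain ⟨c, rfl⟩ := ha
    rw [Submodule.mem_bot, mul_comm, mul_smul, h4 n hn, smul_zero]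
  have hNA : N = A := by
    apply le_antisymm _ hAN
    have := iter (r - 1)
    rw [Nat.sub_add_cancel hr, hIr, sup_bot_eq] at this
    exact this
  -- N is finitely generated
  have hNfg : N.FG := by
    rw [hNA, hA]
    exact Submodule.fg_span ((T : Set M).toFinite.image p)
  -- range s is finitely generated
  have hsfg : (LinearMap.range s).FG := by
    rw [LinearMap.range_eq_map]
    exact (Module.finite_def.mp h2).map s
  -- M = N ⊔ range s
  have htop : N ⊔ LinearMap.range s = ⊤ := by
    rw [eq_top_iff]
    intro x _
    have hx : x = p x + s (N.mkQ x) := by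
      simp [hp, sub_add_cancel]
    rw [hx]
    exact Submodule.add_mem_sup (hpN x) ⟨N.mkQ x, rfl⟩
  exact ⟨htop ▸ hNfg.sup hsfg⟩
end

section
/- Let O be a complete discrete valuation ring with fraction field K of characteristic 0 and residue characteristic ℓ. Let G = T ⋊ W where T is a finite abelian ℓ-group and W is an ℓ′-group acting faithfully on T. Let t be the canonical symmetrising form on KG and s = t_u a symmetrising form with u ∈ Z(KG)^×. Suppose s restricts to O-valued on OG, and s(x) = δ_{x,1} for all x ∈ T. Then u ∈ Z(OG), and the coefficient α of 1 in u² (in the group basis) lies in O and satisfies α ≡ 1 (mod the maximal ideal of O). -/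
lemma aux_sum' {T : Type*} [CommGroup T] [Fintype T] {M : Type*} [AddCommMonoid M]
    (H : Subgroup T) (f : T → M) (hf : ∀ h ∈ H, ∀ t, f (h * t) = f t) :
    ∃ x : M, ∑ t, f t = (Nat.card H) • x := by
  classical
  haveI : Fintype (T ⧸ H) := Fintype.ofFinite _
  haveI : Fintype H := Fintype.ofFinite _
  refine ⟨∑ q : T ⧸ H, f q.out, ?_⟩
  have hbij : Function.Bijective (fun p : (T ⧸ H) × H => p.1.out * (p.2 : T)) := by
    constructor
    · rintro ⟨q, h⟩ ⟨q', h'⟩ he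
      simp only at he
      have hq : q = q' := by
        have := congrArg (QuotientGroup.mk (s := H)) he
        rwa [QuotientGroup.mk_mul_of_mem _ h.2, QuotientGroup.mk_mul_of_mem _ h'.2,
          QuotientGroup.out_eq', QuotientGroup.out_eq'] at this
      subst hq
      have : (h : T) = h' := mul_left_cancel he
      simp [Prod.ext_iff, Subtype.ext this]
    · intro t
      refine ⟨⟨QuotientGroup.mk t, ⟨(QuotientGroup.mk (s := H) t).out⁻¹ * t, ?_⟩⟩, by simp⟩
      rw [← QuotientGroup.eq]
      exact QuotientGroup.out_eq' _
  rw [← Fintype.sum_bijective _ hbij (fun p => f (p.1.out * p.2)) f (fun _ => rfl)]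
  have : ∀ p : (T ⧸ H) × H, f (p.1.out * p.2) = f p.1.out := by
    rintro ⟨q, h⟩
    rw [mul_comm]
    exact hf _ h.2 _
  rw [Fintype.sum_congr _ _ this, Fintype.sum_prod_type, Nat.card_eq_fintype_card]
  simp [Finset.sum_const, mul_comm, Finset.smul_sum]

def sdpEquiv {T : Type*} [CommGroup T] {W : Type*} [Group W]
    (φ : W →* MulAut T) : W × T ≃ T ⋊[φ] W where
  toFun p := ⟨p.2, p.1⟩
  invFun g := (g.right, g.left)
  left_inv _ := rfl
  right_inv _ := rfl

/-- Let `O` be a complete DVR with fraction field `K` of characteristic `0` and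
residue characteristic `ℓ`, and `G = T ⋊ W` with `T` a finite abelian `ℓ`-group
and `W` an `ℓ′`-group acting faithfully on `T`.  If `u` is an invertible central
element of `KG` such that the symmetric form `s = t_u` (where `t` is the canonical
symmetrising form) is `O`-valued on `OG` and satisfies `s(x) = δ_{x,1}` on `T`,
then `u ∈ Z(OG)` and the coefficient `α` of `1` in `u²` lies in `O` with
`α ≡ 1` modulo the maximal ideal. -/
theorem stmt10 {O : Type*} [CommRing O] [IsDomain O] [IsDiscreteValuationRing O]
    [IsAdicComplete (IsLocalRing.maximalIdeal O) O]
    {K : Type*} [Field K] [Algebra O K] [IsFractionRing O K] [CharZero K]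
    (ℓ : ℕ) [Fact ℓ.Prime] [CharP (IsLocalRing.ResidueField O) ℓ]
    {T : Type*} [CommGroup T] [Fintype T] [DecidableEq T] (hT : IsPGroup ℓ T)
    {W : Type*} [Group W] [Fintype W] (hW : ¬ ℓ ∣ Fintype.card W)
    (φ : W →* MulAut T) (hfaith : Function.Injective φ)
    (u : MonoidAlgebra K (T ⋊[φ] W))
    (hu_center : u ∈ Subring.center (MonoidAlgebra K (T ⋊[φ] W)))
    (hu_unit : IsUnit u)
    (hO : ∀ x : MonoidAlgebra K (T ⋊[φ] W),
      (∀ g, ∃ c : O, x.coeff g = algebraMap O K c) → ∃ c : O, (u * x).coeff 1 = algebraMap O K c)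
    (hdelta : ∀ t : T,
      (u * MonoidAlgebra.of K (T ⋊[φ] W) (SemidirectProduct.inl t)).coeff 1
        = if t = 1 then 1 else 0) :
    (∀ g, ∃ c : O, u.coeff g = algebraMap O K c) ∧
    ∃ a : O, (u * u).coeff 1 = algebraMap O K a ∧ a - 1 ∈ IsLocalRing.maximalIdeal O := by
  classical
  haveI : Fintype (T ⋊[φ] W) := Fintype.ofEquiv _ (sdpEquiv φ)
  have hinj : Function.Injective (algebraMap O K) := IsFractionRing.injective O K
  -- Step 1: all coefficients of u lie in O
  have hcoeff : ∀ g : T ⋊[φ] W, ∃ c : O, u.coeff g = algebraMap O K c := by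
    intro g
    obtain ⟨c, hc⟩ := hO (MonoidAlgebra.single g⁻¹ 1) (by
      intro h
      by_cases hh : g⁻¹ = h
      · exact ⟨1, by simp [MonoidAlgebra.single_apply, hh]⟩
      · exact ⟨0, by simp [MonoidAlgebra.single_apply, hh]⟩)
    refine ⟨c, ?_⟩
    rwa [MonoidAlgebra.mul_single_apply, inv_inv, one_mul, mul_one] at hc
  choose ψ hψ using hcoeff
  -- Step 2: ψ on T is a delta function
  have hψT : ∀ t : T, ψ (SemidirectProduct.inl t) = if t = 1 then 1 else 0 := by
    intro t
    apply hinj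
    have h0 := hdelta t⁻¹
    rw [MonoidAlgebra.of_apply, MonoidAlgebra.mul_single_apply, one_mul, mul_one,
      ← map_inv, inv_inv] at h0
    rw [← hψ, h0]
    by_cases ht : t = 1 <;> simp [ht]
  -- Step 3: ψ is invariant under conjugation
  have hconj : ∀ h g : T ⋊[φ] W, ψ (h * g * h⁻¹) = ψ g := by
    intro h g
    apply hinj
    have hc := Subring.mem_center_iff.mp hu_center (MonoidAlgebra.single h 1)
    have h0 : (MonoidAlgebra.single h (1:K) * u : MonoidAlgebra K (T ⋊[φ] W)).coeff (h * g)
        = (u * MonoidAlgebra.single h (1:K) : MonoidAlgebra K (T ⋊[φ] W)).coeff (h * g) := by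
      rw [hc]
    rw [MonoidAlgebra.single_mul_apply, MonoidAlgebra.mul_single_apply, one_mul, mul_one,
      inv_mul_cancel_left] at h0
    rw [← hψ, ← hψ, ← h0]
  -- ψ at 1
  have hψ1 : ψ (1 : T ⋊[φ] W) = 1 := by
    have := hψT 1
    rwa [map_one, if_pos rfl] at this
  -- Step 4: (u*u) 1 = algebraMap a with a the sum
  set F : T ⋊[φ] W → O := fun g => ψ g * ψ g⁻¹ with hF
  set a : O := ∑ g : T ⋊[φ] W, F g with ha
  have hval : (u * u).coeff 1 = algebraMap O K a := by
    have hs : ∀ {p : (T ⋊[φ] W) × (T ⋊[φ] W)},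
        p ∈ (Finset.univ.image fun g : T ⋊[φ] W => (g, g⁻¹)) ↔ p.1 * p.2 = 1 := by
      intro p
      simp only [Finset.mem_image, Finset.mem_univ, true_and]
      constructor
      · rintro ⟨g, rfl⟩; simp
      · intro hp
        exact ⟨p.1, by rw [Prod.ext_iff]; exact ⟨rfl, (eq_inv_of_mul_eq_one_right hp).symm⟩⟩
    rw [MonoidAlgebra.mul_apply_antidiagonal u u 1 _ hs,
      Finset.sum_image (fun x _ y _ h => (Prod.ext_iff.mp h).1)]
    simp only [hψ, ← map_mul, ha, hF, ← map_sum]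
  refine ⟨fun g => ⟨ψ g, hψ g⟩, a, hval, ?_⟩
  -- Step 5: split the sum
  have hℓO : (ℓ : O) ∈ IsLocalRing.maximalIdeal O := by
    have : IsLocalRing.residue O (ℓ : O) = 0 := by
      rw [map_natCast]
      exact CharP.cast_eq_zero _ ℓ
    exact (IsLocalRing.residue_eq_zero_iff _).mp this
  have hsplit : a = (∑ t : T, F ⟨t, 1⟩) + ∑ w ∈ Finset.univ.erase (1 : W), ∑ t : T, F ⟨t, w⟩ := by
    rw [ha, Fintype.sum_equiv (sdpEquiv φ).symm F (fun p => F ⟨p.2, p.1⟩) (fun x => rfl),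
      Fintype.sum_prod_type]
    rw [← Finset.add_sum_erase Finset.univ _ (Finset.mem_univ (1 : W))]
  have hTpart : (∑ t : T, F ⟨t, 1⟩) = 1 := by
    have key : ∀ t : T, F ⟨t, 1⟩ = if t = 1 then 1 else 0 := by
      intro t
      have h1 : (⟨t, 1⟩ : T ⋊[φ] W) = SemidirectProduct.inl t := rfl
      have h2 : (⟨t, 1⟩ : T ⋊[φ] W)⁻¹ = SemidirectProduct.inl t⁻¹ := by
        rw [h1, ← map_inv]
      rw [hF]
      simp only [h1, h2, hψT]
      by_cases ht : t = 1 <;> simp [ht, hψ1]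
    rw [Fintype.sum_congr _ _ key]
    simp
  -- Step 6: each w ≠ 1 contributes an element of the maximal ideal
  have hWpart : ∀ w ∈ Finset.univ.erase (1 : W),
      (∑ t : T, F ⟨t, w⟩) ∈ IsLocalRing.maximalIdeal O := by
    intro w hw
    have hw1 : w ≠ 1 := Finset.ne_of_mem_erase hw
    have hφw : φ w ≠ 1 := fun h => hw1 (hfaith (h.trans (map_one φ).symm))
    obtain ⟨s, hs⟩ : ∃ s : T, φ w s ≠ s := by
      by_contra h
      push_neg at h
      exact hφw (MulEquiv.ext h)
    set c : T := s * (φ w s)⁻¹ with hcdef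
    have hc1 : c ≠ 1 := fun h => hs (mul_inv_eq_one.mp h).symm
    have hconjid : ∀ t : T,
        (SemidirectProduct.inl s : T ⋊[φ] W) * ⟨t, w⟩ * (SemidirectProduct.inl s)⁻¹
        = ⟨c * t, w⟩ := by
      intro t
      ext <;> simp [hcdef, mul_comm, mul_assoc, mul_left_comm]
    have hFc : ∀ t : T, F ⟨c * t, w⟩ = F ⟨t, w⟩ := by
      intro t
      rw [hF]
      simp only
      rw [← hconjid t, hconj]
      congr 1
      have heq : ((SemidirectProduct.inl s : T ⋊[φ] W) * ⟨t, w⟩ * (SemidirectProduct.inl s)⁻¹)⁻¹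
          = (SemidirectProduct.inl s : T ⋊[φ] W) * (⟨t, w⟩ : T ⋊[φ] W)⁻¹
            * (SemidirectProduct.inl s)⁻¹ := by
        group
      rw [heq, hconj]
    have hn : ∀ (n : ℕ) (t : T), F ⟨c ^ n * t, w⟩ = F ⟨t, w⟩ := by
      intro n
      induction n with
      | zero => simp
      | succ n ih =>
        intro t
        rw [pow_succ', mul_assoc, hFc, ih]
    have hfinv : ∀ h ∈ Subgroup.zpowers c, ∀ t, F ⟨h * t, w⟩ = F ⟨t, w⟩ := by
      intro h hh t
      obtain ⟨n, rfl⟩ := (Submonoid.mem_powers_iff _ _).mp (mem_powers_iff_mem_zpowers.mpr hh)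
      exact hn n t
    obtain ⟨x, hx⟩ := aux_sum' (Subgroup.zpowers c) (fun t => F ⟨t, w⟩) hfinv
    rw [hx, Nat.card_zpowers]
    have hdvd : ℓ ∣ orderOf c := by
      obtain ⟨k, hk⟩ := hT c
      have hdvd' : orderOf c ∣ ℓ ^ k := orderOf_dvd_of_pow_eq_one hk
      obtain ⟨j, hjk, hj⟩ := (Nat.dvd_prime_pow Fact.out).mp hdvd'
      have hj0 : j ≠ 0 := by
        rintro rfl
        exact hc1 (orderOf_eq_one_iff.mp (by simpa using hj))
      rw [hj]
      exact dvd_pow_self ℓ hj0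
    obtain ⟨m, hm⟩ := hdvd
    rw [hm, nsmul_eq_mul, Nat.cast_mul]
    exact Ideal.mul_mem_right _ _ (Ideal.mul_mem_right _ _ hℓO)
  have hfin : a - 1 = ∑ w ∈ Finset.univ.erase (1 : W), ∑ t : T, F ⟨t, w⟩ := by
    rw [hsplit, hTpart]; ring
  rw [hfin]
  exact Ideal.sum_mem _ hWpart
end

section
/- Let X be a finite group and M an indecomposable lattice over a complete discrete valuation ring O (with residue characteristic ℓ) for X, with vertex Q. Then the ℓ-part of the O-rank of M is at least |X|_ℓ / |Q|. -/
/-- Higman's criterion: an `OX`-module `M` is relatively `Q`-projective if there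
are a left transversal `Tr` of `Q` in `X` and a `Q`-equivariant `O`-linear
endomorphism `φ` of `M` whose relative trace `Σ_{t ∈ Tr} t ∘ φ ∘ t⁻¹` is the
identity. -/
def RelativelyProjective (O : Type*) [CommRing O] {X : Type*} [Group X] [Fintype X]
    (Q : Subgroup X) (M : Type*) [AddCommGroup M] [Module (MonoidAlgebra O X) M]
    [Module O M] [IsScalarTower O (MonoidAlgebra O X) M] : Prop :=
  ∃ (Tr : Finset X) (φ : M →ₗ[O] M),
    (∀ x : X, ∃! t, t ∈ Tr ∧ t⁻¹ * x ∈ Q) ∧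
    (∀ q ∈ Q, ∀ m : M,
      φ (MonoidAlgebra.of O X q • m) = MonoidAlgebra.of O X q • φ m) ∧
    (∀ m : M,
      ∑ t ∈ Tr, MonoidAlgebra.of O X t • φ (MonoidAlgebra.of O X t⁻¹ • m) = m)


/-- A natural number not divisible by `ℓ` is a unit in a local ring whose
residue field has characteristic `ℓ`. -/
lemma aux_isUnit_of_not_dvd {O : Type*} [CommRing O] [IsLocalRing O]
    (ℓ : ℕ) [Fact ℓ.Prime] [CharP (IsLocalRing.ResidueField O) ℓ] {n : ℕ} (hn : ¬ ℓ ∣ n) :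
    IsUnit (n : O) := by
  by_contra h
  have hmem : (n : O) ∈ IsLocalRing.maximalIdeal O := (IsLocalRing.mem_maximalIdeal _).2 h
  have h0 : IsLocalRing.residue O (n : O) = 0 := Ideal.Quotient.eq_zero_iff_mem.2 hmem
  rw [map_natCast] at h0
  exact hn ((CharP.cast_eq_zero_iff _ ℓ n).1 h0)

lemma aux_not_isUnit {O : Type*} [CommRing O] [IsLocalRing O]
    (ℓ : ℕ) [Fact ℓ.Prime] [CharP (IsLocalRing.ResidueField O) ℓ] :
    ¬ IsUnit (ℓ : O) := by
  intro h
  have h0 : IsLocalRing.residue O (ℓ : O) = 0 := by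
    rw [map_natCast]; exact CharP.cast_eq_zero _ ℓ
  have hmem : (ℓ : O) ∈ IsLocalRing.maximalIdeal O := Ideal.Quotient.eq_zero_iff_mem.1 h0
  exact ((IsLocalRing.mem_maximalIdeal _).1 hmem) h

/-- Key arithmetic lemma: divisibility by `ℓ^k` in a local domain of char 0 with
residue characteristic `ℓ` descends to the natural numbers. -/
lemma aux_dvd_of_cast_dvd {O : Type*} [CommRing O] [IsDomain O] [IsLocalRing O] [CharZero O]
    (ℓ : ℕ) [Fact ℓ.Prime] [CharP (IsLocalRing.ResidueField O) ℓ]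
    {k r : ℕ} (hr : r ≠ 0) (h : ((ℓ : O)) ^ k ∣ (r : O)) : ℓ ^ k ∣ r := by
  have hp : ℓ.Prime := Fact.out
  set m := r.factorization ℓ with hm
  rcases le_or_gt k m with h' | h'
  · exact dvd_trans (pow_dvd_pow ℓ h') (Nat.ordProj_dvd r ℓ)
  · exfalso
    have hu : IsUnit ((r / ℓ ^ m : ℕ) : O) :=
      aux_isUnit_of_not_dvd ℓ (Nat.not_dvd_ordCompl hp hr)
    have hrfac : (r : O) = (ℓ : O) ^ m * ((r / ℓ ^ m : ℕ) : O) := by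
      rw [← Nat.cast_pow, ← Nat.cast_mul, Nat.ordProj_mul_ordCompl_eq_self]
    rw [hrfac] at h
    have h2 : (ℓ : O) ^ k ∣ (ℓ : O) ^ m := (hu.dvd_mul_right).1 h
    have h3 : (ℓ : O) ^ m * (ℓ : O) ∣ (ℓ : O) ^ m * 1 := by
      rw [mul_one, ← pow_succ]
      exact dvd_trans (pow_dvd_pow _ h') h2
    have hne : (ℓ : O) ^ m ≠ 0 := by
      exact_mod_cast pow_ne_zero m (Nat.cast_ne_zero.2 hp.ne_zero)
    have h4 : (ℓ : O) ∣ 1 := (mul_dvd_mul_iff_left hne).1 h3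
    exact aux_not_isUnit (O := O) ℓ (isUnit_of_dvd_one h4)

/-- For a finite group `X` and an indecomposable `OX`-lattice `M` with vertex `Q`
(over a complete DVR `O` of characteristic `0` with algebraically closed residue
field of characteristic `ℓ`), the `ℓ`-part of the `O`-rank of `M` is at least
`|X|_ℓ / |Q|`. -/
theorem stmt13 {O : Type*} [CommRing O] [IsDomain O] [IsDiscreteValuationRing O]
    [IsAdicComplete (IsLocalRing.maximalIdeal O) O] [CharZero O]
    [IsAlgClosed (IsLocalRing.ResidueField O)]
    (ℓ : ℕ) [Fact ℓ.Prime] [CharP (IsLocalRing.ResidueField O) ℓ]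
    {X : Type*} [Group X] [Fintype X]
    (M : Type*) [AddCommGroup M] [Module (MonoidAlgebra O X) M]
    [Module O M] [IsScalarTower O (MonoidAlgebra O X) M]
    [Module.Free O M] [Module.Finite O M] [Nontrivial M]
    (hind : ∀ f : M →ₗ[MonoidAlgebra O X] M, f ∘ₗ f = f → f = 0 ∨ f = LinearMap.id)
    (Q : Subgroup X)
    (hQproj : RelativelyProjective O Q M)
    (hQmin : ∀ Q' : Subgroup X, RelativelyProjective O Q' M →
      Nat.card ↥Q ≤ Nat.card ↥Q') :
    ordProj[ℓ] (Fintype.card X) / Nat.card ↥Q ≤ ordProj[ℓ] (Module.finrank O M) := by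
  classical
  have hp : ℓ.Prime := Fact.out
  obtain ⟨Tr, φ, htrans, hQeq, hsum⟩ := hQproj
  haveI : SMulCommClass O (MonoidAlgebra O X) M := IsScalarTower.to_smulCommClass
  -- the `O`-linear action of a group element
  set ρ : X → (M →ₗ[O] M) := fun t =>
    { toFun := fun m => MonoidAlgebra.of O X t • m
      map_add' := fun a b => smul_add _ _ _
      map_smul' := fun a m => (smul_comm _ _ _) } with hρdef
  have hρinv : ∀ t : X, (ρ t⁻¹) ∘ₗ (ρ t) = LinearMap.id := by
    intro t
    ext m
    simp only [hρdef, LinearMap.coe_comp, LinearMap.coe_mk, AddHom.coe_mk, Function.comp_apply,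
      LinearMap.id_coe, id_eq, smul_smul, ← map_mul, inv_mul_cancel, map_one, one_smul]
  -- the Higman relation as an equality of linear maps
  have hF : (∑ t ∈ Tr, (ρ t) ∘ₗ φ ∘ₗ (ρ t⁻¹)) = LinearMap.id := by
    ext m
    simpa [hρdef] using hsum m
  -- take traces
  have htr : (Module.finrank O M : O) = (Tr.card : O) * LinearMap.trace O M φ := by
    have h1 : (LinearMap.trace O M) LinearMap.id
        = ∑ t ∈ Tr, (LinearMap.trace O M) ((ρ t) ∘ₗ φ ∘ₗ (ρ t⁻¹)) := by
      rw [← hF, map_sum]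
    have h2 : ∀ t ∈ Tr, (LinearMap.trace O M) ((ρ t) ∘ₗ φ ∘ₗ (ρ t⁻¹))
        = LinearMap.trace O M φ := by
      intro t _
      have : (ρ t) ∘ₗ (φ ∘ₗ (ρ t⁻¹)) = (ρ t) * (φ * (ρ t⁻¹)) := rfl
      rw [this, LinearMap.trace_mul_comm, mul_assoc,
        show (ρ t⁻¹) * (ρ t) = (1 : Module.End O M) from hρinv t, mul_one]
    rw [← LinearMap.trace_id O M, h1, Finset.sum_congr rfl h2, Finset.sum_const,
      nsmul_eq_mul]
  -- divisibility in `O`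
  have hdvdO : ((Tr.card : ℕ) : O) ∣ ((Module.finrank O M : ℕ) : O) :=
    ⟨LinearMap.trace O M φ, htr⟩
  -- cardinality of the transversal
  have e : (↥Tr × ↥Q) ≃ X :=
    { toFun := fun p => (p.1 : X) * (p.2 : X)
      invFun := fun x => (⟨(htrans x).choose, (htrans x).choose_spec.1.1⟩,
        ⟨((htrans x).choose)⁻¹ * x, (htrans x).choose_spec.1.2⟩)
      left_inv := by
        rintro ⟨⟨t, ht⟩, ⟨q, hq⟩⟩
        have hu : (htrans (t * q)).choose = t :=
          ((htrans (t * q)).choose_spec.2 t ⟨ht, by simpa using hq⟩).symm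
        ext
        · simpa using hu
        · show ((htrans (t * q)).choose)⁻¹ * (t * q) = q
          rw [hu, inv_mul_cancel_left]
      right_inv := fun x => by
        simpa using mul_inv_cancel_left (htrans x).choose x }
  have hcard : Tr.card * Nat.card ↥Q = Fintype.card X := by
    rw [← Fintype.card_congr e, Fintype.card_prod, Fintype.card_coe, Nat.card_eq_fintype_card]
  -- translate to ℕ-divisibility of the ℓ-part
  set a := Tr.card with ha
  set q := Nat.card ↥Q with hq
  set n := Fintype.card X with hn
  set r := Module.finrank O M with hr
  have hrne : r ≠ 0 := (Module.finrank_pos (R := O) (M := M)).ne'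
  have hqpos : 0 < q := Nat.card_pos
  have hnpos : 0 < n := Fintype.card_pos
  have hapos : 0 < a := by
    rcases Nat.eq_zero_or_pos a with h0 | h0
    · rw [h0, zero_mul] at hcard; omega
    · exact h0
  have hdvdpow : (ℓ : O) ^ (a.factorization ℓ) ∣ (r : O) := by
    refine dvd_trans ?_ hdvdO
    have := Nat.ordProj_dvd a ℓ
    exact_mod_cast Nat.cast_dvd_cast (α := O) this
  have hkey : ℓ ^ (a.factorization ℓ) ∣ r := aux_dvd_of_cast_dvd ℓ hrne hdvdpow
  have hkle : a.factorization ℓ ≤ r.factorization ℓ :=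
    (Nat.Prime.pow_dvd_iff_le_factorization hp hrne).1 hkey
  -- final arithmetic
  have hfac : n.factorization ℓ = a.factorization ℓ + q.factorization ℓ := by
    rw [← hcard, Nat.factorization_mul hapos.ne' hqpos.ne', Finsupp.add_apply]
  calc ℓ ^ n.factorization ℓ / q
      ≤ ℓ ^ n.factorization ℓ / ℓ ^ (q.factorization ℓ) :=
        Nat.div_le_div_left (Nat.le_of_dvd hqpos (Nat.ordProj_dvd q ℓ))
          (Nat.pow_pos hp.pos)
    _ = ℓ ^ (a.factorization ℓ) := by
        rw [hfac, pow_add, Nat.mul_div_cancel _ (Nat.pow_pos hp.pos)]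
    _ ≤ ℓ ^ (r.factorization ℓ) := Nat.pow_le_pow_right hp.pos hkle
end

section
/- Let Y be an R-algebra, finitely generated free as R-module, with a symmetrising form t : Y → R. Then the map u ↦ t_u (where t_u(x) := t(ux)) is an R-module isomorphism from Z(Y) onto the R-module of symmetric forms on Y; moreover t_u is a symmetrising form if and only if u ∈ Z(Y)^×. -/
/-- For a finitely generated free `R`-algebra `Y` with symmetrising form `t`, the map
`u ↦ t_u` (where `t_u(x) = t(ux)`) is a bijection from the centre `Z(Y)` onto the
symmetric forms on `Y`; moreover for central `u`, the form `t_u` is symmetrising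
(i.e. nondegenerate/perfect) iff `u` is a unit. -/
theorem stmt15 {R : Type*} {Y : Type*} [CommRing R] [Ring Y] [Algebra R Y]
    [Module.Finite R Y] [Module.Free R Y]
    (t : Y →ₗ[R] R) (ht1 : ∀ x y : Y, t (x * y) = t (y * x))
    (ht2 : Function.Bijective ((LinearMap.mul R Y).compr₂ t)) :
    (∀ u ∈ Subring.center Y, ∀ x y : Y, t (u * (x * y)) = t (u * (y * x)))
    ∧ (∀ s : Y →ₗ[R] R, (∀ x y : Y, s (x * y) = s (y * x)) →
        ∃! u : Y, u ∈ Subring.center Y ∧ s = t ∘ₗ LinearMap.mulLeft R u)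
    ∧ ∀ u ∈ Subring.center Y,
        (Function.Bijective ((LinearMap.mul R Y).compr₂ (t ∘ₗ LinearMap.mulLeft R u))
          ↔ IsUnit u) := by
  have key : ∀ a b : Y, (∀ x, t (a * x) = t (b * x)) → a = b := by
    intro a b h
    apply ht2.1
    ext x
    simpa using h x
  have cyc : ∀ u : Y, u ∈ Subring.center Y → ∀ x y : Y,
      t (u * (x * y)) = t (u * (y * x)) := by
    intro u hu x y
    rw [Subring.mem_center_iff] at hu
    calc t (u * (x * y)) = t ((u * x) * y) := by rw [mul_assoc]
      _ = t (y * (u * x)) := ht1 _ _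
      _ = t ((y * u) * x) := by rw [mul_assoc]
      _ = t ((u * y) * x) := by rw [hu y]
      _ = t (u * (y * x)) := by rw [mul_assoc]
  refine ⟨cyc, ?_, ?_⟩
  · intro s hs
    obtain ⟨u, hu⟩ := ht2.2 s
    have hu' : ∀ x, t (u * x) = s x := by
      intro x
      have := congrArg (fun f : Y →ₗ[R] R => f x) hu
      simpa using this
    have hcent : u ∈ Subring.center Y := by
      rw [Subring.mem_center_iff]
      intro v
      apply key
      intro x
      calc t ((v * u) * x) = t (u * (x * v)) := by
            rw [mul_assoc, ht1, mul_assoc]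
        _ = s (x * v) := hu' _
        _ = s (v * x) := hs _ _
        _ = t (u * (v * x)) := (hu' _).symm
        _ = t ((u * v) * x) := by rw [mul_assoc]
    refine ⟨u, ⟨hcent, ?_⟩, ?_⟩
    · ext x
      simp [LinearMap.mulLeft_apply, hu' x]
    · rintro v ⟨hv, rfl⟩
      apply key
      intro x
      simp [hu' x]
  · intro u hu
    have hform : ((LinearMap.mul R Y).compr₂ (t ∘ₗ LinearMap.mulLeft R u))
        = ((LinearMap.mul R Y).compr₂ t) ∘ₗ LinearMap.mulLeft R u := by
      ext x y
      simp [mul_assoc]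
    rw [hform, LinearMap.coe_comp]
    constructor
    · intro hbij
      have hsurj : Function.Surjective (LinearMap.mulLeft R u) := by
        intro y
        obtain ⟨x, hx⟩ := hbij.2 (((LinearMap.mul R Y).compr₂ t) y)
        exact ⟨x, ht2.1 hx⟩
      obtain ⟨v, hv⟩ := hsurj 1
      simp only [LinearMap.mulLeft_apply] at hv
      rw [Subring.mem_center_iff] at hu
      exact ⟨⟨u, v, hv, by rw [hu v]; exact hv⟩, rfl⟩
    · intro huu
      obtain ⟨w, rfl⟩ := huu
      have : Function.Bijective (LinearMap.mulLeft R (w : Y)) := by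
        constructor
        · intro a b h
          simpa using congrArg (fun z => (↑w⁻¹ : Y) * z) h
        · intro a
          exact ⟨(↑w⁻¹ : Y) * a, by simp [LinearMap.mulLeft_apply, ← mul_assoc]⟩
      exact ht2.comp this
end

section
/- Let O be a complete discrete valuation ring with fraction field K of characteristic 0, Y a symmetric O-algebra with KY split semisimple, and s : KY → K a symmetrising form with s = Σ_χ s_χ χ whose restriction to Y is O-valued. If U is a projective Y-module with K ⊗_O U ≅ ⊕_χ V_χ^{d_χ} (V_χ simple with character χ), then Σ_{χ ∈ Irr(KY)} s_χ d_χ ∈ O. -/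
section aux
variable {R M : Type*} [CommRing R] [AddCommGroup M] [Module R M]

lemma trace_eq_sum_repr' {κ : Type*} [Fintype κ] [DecidableEq κ] (b : Module.Basis κ R M)
    (f : M →ₗ[R] M) :
    LinearMap.trace R M f = ∑ j, b.repr (f (b j)) j := by
  rw [LinearMap.trace_eq_matrix_trace R b, Matrix.trace]
  simp [Matrix.diag, LinearMap.toMatrix_apply]

lemma stdBasis_repr_eq {m n : Type*} [Fintype m] [Fintype n]
    [DecidableEq m] [DecidableEq n] (M : Matrix m n R) (p : m) (q : n) :
    (Matrix.stdBasis R m n).repr M (p, q) = M p q := by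
  have h : M = ∑ ij : m × n, M ij.1 ij.2 • Matrix.stdBasis R m n ij := by
    ext u v
    simp [Matrix.stdBasis_eq_single, Matrix.single, Matrix.sum_apply,
      Fintype.sum_prod_type, ite_and, Finset.sum_ite_eq, Finset.sum_ite_eq']
  conv_lhs => rw [h]
  rw [Module.Basis.repr_sum_self]

/-- the linear map `X ↦ (B i * X i * C i)_i` on a product of matrix rings. -/
def mulLR {K : Type*} [CommRing K] {ι : Type*} (n : ι → ℕ)
    (B C : ∀ i, Matrix (Fin (n i)) (Fin (n i)) K) :
    (∀ i, Matrix (Fin (n i)) (Fin (n i)) K) →ₗ[K] (∀ i, Matrix (Fin (n i)) (Fin (n i)) K) where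
  toFun X := fun i => B i * X i * C i
  map_add' X Y := by funext i; simp [Matrix.mul_add, Matrix.add_mul]
  map_smul' c X := by funext i; simp [Matrix.mul_smul, Matrix.smul_mul]

lemma trace_mulLR {K : Type*} [CommRing K] {ι : Type*} [Fintype ι] [DecidableEq ι]
    (n : ι → ℕ) (B C : ∀ i, Matrix (Fin (n i)) (Fin (n i)) K) :
    LinearMap.trace K _ (mulLR n B C) = ∑ i, (B i).trace * (C i).trace := by
  classical
  let bas : Module.Basis (Σ i, Fin (n i) × Fin (n i)) K (∀ i, Matrix (Fin (n i)) (Fin (n i)) K) :=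
    Pi.basis fun i => Matrix.stdBasis K (Fin (n i)) (Fin (n i))
  rw [trace_eq_sum_repr' bas]
  rw [← Finset.univ_sigma_univ, Finset.sum_sigma]
  refine Finset.sum_congr rfl fun i _ => ?_
  rw [Fintype.sum_prod_type]
  have hterm : ∀ p q : Fin (n i),
      (bas.repr ((mulLR n B C) (bas ⟨i, (p, q)⟩))) ⟨i, (p, q)⟩ = B i p p * C i q q := by
    intro p q
    have h1 : ((mulLR n B C) (bas ⟨i, (p, q)⟩)) i
        = B i * Matrix.single p q 1 * C i := by
      simp [mulLR, bas, Pi.basis_apply, Matrix.stdBasis_eq_single]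
    rw [show (bas.repr ((mulLR n B C) (bas ⟨i, (p, q)⟩))) ⟨i, (p, q)⟩
        = (Matrix.stdBasis K (Fin (n i)) (Fin (n i))).repr
            (((mulLR n B C) (bas ⟨i, (p, q)⟩)) i) (p, q) from rfl, h1, stdBasis_repr_eq]
    simp [Matrix.mul_apply, Matrix.single, ite_and, Finset.sum_ite_eq,
      Finset.sum_ite_eq']
  simp_rw [hterm]
  rw [← Finset.sum_mul_sum]
  rfl
end aux

/-- Tate-duality divisibility for Schur elements: let `O` be a complete DVR with
fraction field `K` of characteristic `0`, `Y` a symmetric `O`-algebra such that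
`KY` is split semisimple (modelled as `Π i, Mat_{n i}(K)`, via an embedding `ιY`
of `Y` whose image spans over `K`), and `s = Σ_χ s_χ χ` a symmetrising form on
`KY` which is `O`-valued on `Y`.  If `U` is a finitely generated projective
`Y`-module with `K ⊗ U ≅ ⊕_χ V_χ^{d_χ}` (expressed on characters), then
`Σ_χ s_χ d_χ ∈ O`. -/
theorem stmt16 {O : Type*} [CommRing O] [IsDomain O] [IsDiscreteValuationRing O]
    [IsAdicComplete (IsLocalRing.maximalIdeal O) O] [CharZero O]
    {K : Type*} [Field K] [Algebra O K] [IsFractionRing O K]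
    {ι : Type*} [Fintype ι] [DecidableEq ι] (n : ι → ℕ) (hn : ∀ i, 0 < n i)
    {Y : Type*} [Ring Y] [Algebra O Y] [Module.Finite O Y] [Module.Free O Y]
    -- `Y` is a symmetric `O`-algebra:
    (t : Y →ₗ[O] O) (ht1 : ∀ x y : Y, t (x * y) = t (y * x))
    (ht2 : Function.Bijective ((LinearMap.mul O Y).compr₂ t))
    -- the embedding of `Y` into `KY = Π i, Mat_{n i}(K)`:
    (ιY : Y →+* (∀ i, Matrix (Fin (n i)) (Fin (n i)) K))
    (hιY_inj : Function.Injective ιY)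
    (hιY_smul : ∀ (c : O) (y : Y), ιY (c • y) = algebraMap O K c • ιY y)
    (hspan : Submodule.span K (Set.range ιY) = ⊤)
    -- the symmetrising form `s = Σ_χ s_χ χ`, `O`-valued on `Y`:
    (s : ι → K) (hs0 : ∀ i, s i ≠ 0)
    (hsO : ∀ y : Y, ∃ c : O, (∑ i, s i * ((ιY y) i).trace) = algebraMap O K c)
    -- the projective module `U` and the multiplicities `d`:
    {U : Type*} [AddCommGroup U] [Module Y U] [Module O U] [IsScalarTower O Y U]
    [SMulCommClass Y O U] [Module.Finite Y U] [Module.Free O U] [Module.Finite O U]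
    (hUproj : Module.Projective Y U)
    (d : ι → ℕ)
    (hchar : ∀ y : Y,
      algebraMap O K (LinearMap.trace O U (DistribMulAction.toLinearMap O U y))
        = ∑ i, (d i : K) * ((ιY y) i).trace) :
    ∃ c : O, (∑ i, s i * (d i : K)) = algebraMap O K c := by
  classical
  haveI := hUproj
  set V := ∀ i, Matrix (Fin (n i)) (Fin (n i)) K with hV
  -- split `U` off a finite free `Y`-module
  obtain ⟨m, π, hπ⟩ := Module.Finite.exists_fin' Y U
  obtain ⟨f, hf⟩ := Module.projective_lifting_property π LinearMap.id hπ
  set κ := Module.Free.ChooseBasisIndex O Y with hκ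
  let b : Module.Basis κ O Y := Module.Free.chooseBasis O Y
  set a : Y := ∑ j, (f (π (Pi.single j 1))) j with ha
  -- expansion of `ιY` along the basis
  have hexp : ∀ w : Y, ιY w = ∑ j, algebraMap O K (b.repr w j) • ιY (b j) := by
    intro w
    conv_lhs => rw [← b.sum_repr w]
    rw [map_sum]
    exact Finset.sum_congr rfl fun j _ => hιY_smul _ _
  -- `ιY ∘ b` is a basis of `V`
  have hli : LinearIndependent K fun i : κ => ιY (b i) := by
    rw [Fintype.linearIndependent_iff]
    intro g hg
    obtain ⟨c, hc⟩ := IsLocalization.exist_integer_multiples_of_finite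
      (nonZeroDivisors O) g
    choose o ho using hc
    have hcne : algebraMap O K (c : O) ≠ 0 := by
      exact map_ne_zero_of_mem_nonZeroDivisors (algebraMap O K)
        (IsFractionRing.injective O K) c.2
    have h0 : ιY (∑ i, o i • b i) = 0 := by
      rw [map_sum]
      have : ∀ i : κ, ιY (o i • b i) = algebraMap O K (c : O) • (g i • ιY (b i)) := by
        intro i
        rw [hιY_smul, ho i, smul_smul]
        congr 1
        exact Algebra.smul_def _ _
      rw [Finset.sum_congr rfl fun i _ => this i, ← Finset.smul_sum, hg, smul_zero]
    have h1 : (∑ i, o i • b i) = 0 := by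
      apply hιY_inj
      rw [h0, map_zero]
    have h2 : ∀ i, o i = 0 :=
      Fintype.linearIndependent_iff.mp b.linearIndependent o h1
    intro i
    have := ho i
    rw [h2 i, map_zero] at this
    have h3 : algebraMap O K (c : O) * g i = 0 := by
      rw [← Algebra.smul_def]; exact this.symm
    rcases mul_eq_zero.mp h3 with h | h
    · exact absurd h hcne
    · exact h
  have hsp : ⊤ ≤ Submodule.span K (Set.range fun i : κ => ιY (b i)) := by
    rw [← hspan, Submodule.span_le]
    rintro x ⟨w, rfl⟩
    rw [hexp w]
    exact Submodule.sum_mem _ fun j _ =>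
      Submodule.smul_mem _ _ (Submodule.subset_span ⟨j, rfl⟩)
  let B : Module.Basis κ K V := Module.Basis.mk hli hsp
  have hB : ∀ i : κ, B i = ιY (b i) := fun i => Module.Basis.mk_apply hli hsp i
  have hrepr : ∀ (w : Y) (i : κ), B.repr (ιY w) i = algebraMap O K (b.repr w i) := by
    intro w i
    have hw : ιY w = ∑ j, algebraMap O K (b.repr w j) • B j := by
      rw [hexp w]
      exact Finset.sum_congr rfl fun j _ => by rw [hB]
    rw [hw, Module.Basis.repr_sum_self]
  -- trace of `y` acting on `U`, computed through the splitting
  have htr : ∀ y : Y, LinearMap.trace O U (DistribMulAction.toLinearMap O U y)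
      = ∑ i : κ, b.repr (y * b i * a) i := by
    intro y
    have hgf : (π.restrictScalars O) ∘ₗ
        ((f.restrictScalars O) ∘ₗ DistribMulAction.toLinearMap O U y)
        = DistribMulAction.toLinearMap O U y := by
      ext u
      exact LinearMap.congr_fun hf (y • u)
    rw [← hgf, LinearMap.trace_comp_comm']
    set h : (Fin m → Y) →ₗ[O] (Fin m → Y) :=
      ((f.restrictScalars O) ∘ₗ DistribMulAction.toLinearMap O U y) ∘ₗ
        (π.restrictScalars O) with hh
    rw [trace_eq_sum_repr' (Pi.basis fun _ : Fin m => b) h]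
    rw [← Finset.univ_sigma_univ, Finset.sum_sigma]
    have hsingle : ∀ (j : Fin m) (w x : Y),
        w • (Pi.single j x : Fin m → Y) = Pi.single j (w * x) := by
      intro j w x
      funext j'
      rcases eq_or_ne j' j with rfl | hne
      · simp
      · simp [Pi.single_eq_of_ne hne]
    have hcomp : ∀ (j : Fin m) (i : κ),
        (h ((Pi.basis fun _ : Fin m => b) ⟨j, i⟩)) j = y * b i * (f (π (Pi.single j 1))) j := by
      intro j i
      have e1 : (Pi.basis fun _ : Fin m => b) ⟨j, i⟩ = Pi.single j (b i) := by
        simp [Pi.basis_apply]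
      have e2 : h (Pi.single j (b i)) = f (y • π (Pi.single j (b i))) := rfl
      have e3 : y • π (Pi.single j (b i)) = π (Pi.single j (y * b i)) := by
        rw [← hsingle j y (b i), map_smul]
      have e4 : (Pi.single j (y * b i) : Fin m → Y)
          = (y * b i) • (Pi.single j (1 : Y) : Fin m → Y) := by
        rw [hsingle, mul_one]
      rw [e1, e2, e3, e4, map_smul, map_smul]
      simp [smul_eq_mul, mul_assoc]
    calc (∑ j : Fin m, ∑ i : κ,
          ((Pi.basis fun _ : Fin m => b).repr (h ((Pi.basis fun _ : Fin m => b) ⟨j, i⟩))) ⟨j, i⟩)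
        = ∑ j : Fin m, ∑ i : κ, b.repr (y * b i * (f (π (Pi.single j 1))) j) i := by
          refine Finset.sum_congr rfl fun j _ => Finset.sum_congr rfl fun i _ => ?_
          rw [Pi.basis_repr, hcomp j i]
      _ = ∑ i : κ, ∑ j : Fin m, b.repr (y * b i * (f (π (Pi.single j 1))) j) i :=
          Finset.sum_comm
      _ = ∑ i : κ, b.repr (y * b i * a) i := by
          refine Finset.sum_congr rfl fun i _ => ?_
          rw [ha, Finset.mul_sum, map_sum]
          simp
  -- the two linear functionals agree on the image of `Y`, hence everywhere
  have key : ∀ w : V, (∑ i, (d i : K) * (w i).trace)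
      = ∑ i, (w i).trace * ((ιY a) i).trace := by
    let Λ₁ : V →ₗ[K] K := ∑ i, (d i : K) •
      ((Matrix.traceLinearMap (Fin (n i)) K K) ∘ₗ LinearMap.proj i)
    let Λ₂ : V →ₗ[K] K := ∑ i, ((ιY a) i).trace •
      ((Matrix.traceLinearMap (Fin (n i)) K K) ∘ₗ LinearMap.proj i)
    have hΛ₁ : ∀ w : V, Λ₁ w = ∑ i, (d i : K) * (w i).trace := by
      intro w
      simp only [Λ₁, LinearMap.sum_apply, LinearMap.smul_apply, LinearMap.coe_comp,
        Function.comp_apply, smul_eq_mul]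
      rfl
    have hΛ₂ : ∀ w : V, Λ₂ w = ∑ i, (w i).trace * ((ιY a) i).trace := by
      intro w
      simp only [Λ₂, LinearMap.sum_apply, LinearMap.smul_apply, LinearMap.coe_comp,
        Function.comp_apply, smul_eq_mul]
      exact Finset.sum_congr rfl fun i _ => mul_comm _ _
    have hagree : Λ₁ = Λ₂ := by
      apply LinearMap.ext_on hspan
      rintro x ⟨y, rfl⟩
      rw [hΛ₁, hΛ₂, ← hchar y, htr y]
      have hmap : algebraMap O K (∑ i : κ, b.repr (y * b i * a) i)
          = ∑ i : κ, B.repr (ιY (y * b i * a)) i := by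
        rw [map_sum]
        exact Finset.sum_congr rfl fun i _ => (hrepr _ _).symm
      rw [hmap]
      have htraceV : (∑ i : κ, B.repr (ιY (y * b i * a)) i)
          = LinearMap.trace K V (mulLR n (ιY y) (ιY a)) := by
        rw [trace_eq_sum_repr' B]
        refine Finset.sum_congr rfl fun i _ => ?_
        have harg : (mulLR n (ιY y) (ιY a)) (B i) = ιY (y * b i * a) := by
          rw [hB]
          funext i'
          show (ιY y) i' * (ιY (b i)) i' * (ιY a) i' = ιY (y * b i * a) i'
          rw [map_mul, map_mul]
          rfl
        rw [harg]
      rw [htraceV, trace_mulLR]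
    intro w
    rw [← hΛ₁, ← hΛ₂, hagree]
  -- evaluate at the matrix units to identify `d i`
  have hd : ∀ i : ι, (d i : K) = ((ιY a) i).trace := by
    intro i₀
    let p0 : Fin (n i₀) := ⟨0, hn i₀⟩
    have h := key (Pi.single i₀ (Matrix.single p0 p0 1))
    have htr1 : ∀ i : ι, ((Pi.single i₀ (Matrix.single p0 p0 1) : V) i).trace
        = if i = i₀ then (1 : K) else 0 := by
      intro i
      rcases eq_or_ne i i₀ with rfl | hne
      · simp [Matrix.trace, Matrix.diag, Matrix.single, Finset.sum_ite_eq]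
      · simp [Pi.single_eq_of_ne hne, hne]
    simp only [htr1] at h
    simpa [mul_ite, ite_mul, Finset.sum_ite_eq'] using h
  obtain ⟨c, hc⟩ := hsO a
  refine ⟨c, ?_⟩
  rw [Finset.sum_congr rfl fun i _ => by rw [hd i]]
  exact hc
end

section
/- Let W be a finite group of order prime to ℓ acting on a finite abelian ℓ-group T. Then there is a W-equivariant bijection between T and Irr(T); in particular, for corresponding elements s ∈ T and ŝ ∈ Irr(T), the stabilisers satisfy W_s = W_{ŝ}, and the bijection can be chosen to send 1 ∈ T to the trivial character. -/
set_option linter.unusedSectionVars false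

open MulAction Set

section aux
variable {G Z : Type*} [Group G] [Finite G] [MulAction G Z] [Finite Z]

private lemma GI_aux : ∀ (n : ℕ) (A B : Set Z), A.ncard = n →
    (∀ (g : G) z, z ∈ A → g • z ∈ A) → (∀ (g : G) z, z ∈ B → g • z ∈ B) →
    (∀ H : Subgroup G, {z | z ∈ A ∧ ∀ g ∈ H, g • z = z}.ncard
      = {z | z ∈ B ∧ ∀ g ∈ H, g • z = z}.ncard) →
    ∃ f : Z → Z, Set.BijOn f A B ∧ ∀ (g : G) z, z ∈ A → f (g • z) = g • f z := by
  intro n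
  induction n using Nat.strong_induction_on with
  | _ n ih =>
  intro A B hAn hA hB hfix
  classical
  -- ncard B = ncard A (take H = ⊥)
  have hbot : ∀ C : Set Z, {z | z ∈ C ∧ ∀ g ∈ (⊥ : Subgroup G), g • z = z} = C := by
    intro C
    ext z
    exact ⟨fun h => h.1, fun h => ⟨h, fun g hg => by
      rw [Subgroup.mem_bot] at hg; rw [hg, one_smul]⟩⟩
  have hBA : B.ncard = A.ncard := by
    have := hfix ⊥
    rw [hbot A, hbot B] at this
    exact this.symm
  rcases Set.eq_empty_or_nonempty A with hAe | hAne
  · have hBe : B = ∅ := by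
      rw [← Set.ncard_eq_zero (Set.toFinite B), hBA, hAe, Set.ncard_empty]
    refine ⟨id, ?_, fun g z hz => by simp [hAe] at hz⟩
    rw [hAe, hBe]
    exact Set.bijOn_empty id
  -- A nonempty: find a point with maximal stabilizer among A ∪ B
  have hUne : (A ∪ B).Nonempty := hAne.mono Set.subset_union_left
  obtain ⟨w₀, hw₀U, hw₀max⟩ := Finset.exists_max_image (A ∪ B).toFinite.toFinset
      (fun z => Nat.card (stabilizer G z)) (by rwa [Set.Finite.toFinset_nonempty])
  rw [Set.Finite.mem_toFinset] at hw₀U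
  set S := stabilizer G w₀ with hS
  have hmax : ∀ z ∈ A ∪ B, S ≤ stabilizer G z → stabilizer G z = S := by
    intro z hz hle
    have hcard : Nat.card (stabilizer G z) ≤ Nat.card S :=
      hw₀max z (by rwa [Set.Finite.mem_toFinset])
    have hsub : (S : Set G) ⊆ (stabilizer G z : Set G) := hle
    have : (S : Set G) = (stabilizer G z : Set G) := by
      apply Set.eq_of_subset_of_ncard_le hsub
      rw [← Nat.card_coe_set_eq, ← Nat.card_coe_set_eq]
      exact hcard
    exact (SetLike.ext' this).symm
  -- both fixed sets at S are nonempty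
  have hfixS := hfix S
  have hne2 : {z | z ∈ A ∧ ∀ g ∈ S, g • z = z}.Nonempty ∧
      {z | z ∈ B ∧ ∀ g ∈ S, g • z = z}.Nonempty := by
    have hw₀fix : ∀ g ∈ S, g • w₀ = w₀ := fun g hg => hg
    rcases hw₀U with h | h
    · have h1 : {z | z ∈ A ∧ ∀ g ∈ S, g • z = z}.Nonempty := ⟨w₀, h, hw₀fix⟩
      refine ⟨h1, ?_⟩
      rw [← Set.ncard_pos (Set.toFinite _), ← hfixS, Set.ncard_pos (Set.toFinite _)]
      exact h1
    · have h1 : {z | z ∈ B ∧ ∀ g ∈ S, g • z = z}.Nonempty := ⟨w₀, h, hw₀fix⟩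
      refine ⟨?_, h1⟩
      rw [← Set.ncard_pos (Set.toFinite _), hfixS, Set.ncard_pos (Set.toFinite _)]
      exact h1
  obtain ⟨⟨x, hxA, hxfix⟩, ⟨y, hyB, hyfix⟩⟩ := hne2
  have hsx : stabilizer G x = S :=
    hmax x (Set.mem_union_left _ hxA) (fun g hg => mem_stabilizer_iff.mpr (hxfix g hg))
  have hsy : stabilizer G y = S :=
    hmax y (Set.mem_union_right _ hyB) (fun g hg => mem_stabilizer_iff.mpr (hyfix g hg))
  -- the orbit bijection θ
  set θ : Z → Z := fun z =>
    if h : z ∈ orbit G x then (mem_orbit_iff.mp h).choose • y else z with hθdef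
  have hθ : ∀ g : G, θ (g • x) = g • y := by
    intro g
    have h : g • x ∈ orbit G x := mem_orbit x g
    have hg' := (mem_orbit_iff.mp h).choose_spec
    set g' := (mem_orbit_iff.mp h).choose
    have hst : g⁻¹ * g' ∈ stabilizer G y := by
      rw [hsy, ← hsx, mem_stabilizer_iff, mul_smul, hg', inv_smul_smul]
    have : g⁻¹ • (g' • y) = y := by rw [← mul_smul]; exact hst
    have h2 : g' • y = g • y := by
      have := congrArg (g • ·) this
      simpa [smul_inv_smul] using this
    simp only [hθdef, dif_pos h]
    exact h2
  have hOxA : orbit G x ⊆ A := by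
    rintro z ⟨g, rfl⟩
    exact hA g x hxA
  have hOyB : orbit G y ⊆ B := by
    rintro z ⟨g, rfl⟩
    exact hB g y hyB
  have hθinj : Set.InjOn θ (orbit G x) := by
    rintro z₁ ⟨g₁, rfl⟩ z₂ ⟨g₂, rfl⟩ h
    rw [hθ g₁, hθ g₂] at h
    have : g₂⁻¹ * g₁ ∈ stabilizer G x := by
      rw [hsx, ← hsy, mem_stabilizer_iff, mul_smul, h, inv_smul_smul]
    have h2 : g₂⁻¹ • (g₁ • x) = x := by rw [← mul_smul]; exact this
    calc g₁ • x = g₂ • (g₂⁻¹ • (g₁ • x)) := by rw [smul_inv_smul]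
    _ = g₂ • x := by rw [h2]
  have hθbij : Set.BijOn θ (orbit G x) (orbit G y) := by
    refine ⟨?_, hθinj, ?_⟩
    · rintro z ⟨g, rfl⟩; rw [hθ g]; exact mem_orbit y g
    · rintro z ⟨g, rfl⟩; exact ⟨g • x, mem_orbit x g, hθ g⟩
  -- fixedness transfer along θ
  have hθfix : ∀ (H : Subgroup G) (g : G),
      (∀ h ∈ H, h • (g • x) = g • x) ↔ (∀ h ∈ H, h • (g • y) = g • y) := by
    intro H g
    have key : ∀ h : G, (h • (g • x) = g • x) ↔ (h • (g • y) = g • y) := by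
      intro h
      have e1 : (h • (g • x) = g • x) ↔ g⁻¹ * h * g ∈ stabilizer G x := by
        rw [mem_stabilizer_iff, mul_smul, mul_smul]
        constructor
        · intro hh; rw [hh, inv_smul_smul]
        · intro hh
          have := congrArg (g • ·) hh
          simpa [smul_inv_smul] using this
      have e2 : (h • (g • y) = g • y) ↔ g⁻¹ * h * g ∈ stabilizer G y := by
        rw [mem_stabilizer_iff, mul_smul, mul_smul]
        constructor
        · intro hh; rw [hh, inv_smul_smul]
        · intro hh
          have := congrArg (g • ·) hh
          simpa [smul_inv_smul] using this
      rw [e1, e2, hsx, hsy]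
    exact ⟨fun hh h hH => (key h).mp (hh h hH), fun hh h hH => (key h).mpr (hh h hH)⟩
  -- equal fixed cardinalities on the two orbits
  have horbfix : ∀ H : Subgroup G,
      {z | z ∈ orbit G x ∧ ∀ g ∈ H, g • z = z}.ncard
        = {z | z ∈ orbit G y ∧ ∀ g ∈ H, g • z = z}.ncard := by
    intro H
    have himg : θ '' {z | z ∈ orbit G x ∧ ∀ g ∈ H, g • z = z}
        = {z | z ∈ orbit G y ∧ ∀ g ∈ H, g • z = z} := by
      ext z
      constructor
      · rintro ⟨z', ⟨⟨g, rfl⟩, hfx⟩, rfl⟩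
        rw [hθ g]
        exact ⟨mem_orbit y g, (hθfix H g).mp hfx⟩
      · rintro ⟨⟨g, rfl⟩, hfx⟩
        exact ⟨g • x, ⟨mem_orbit x g, (hθfix H g).mpr hfx⟩, hθ g⟩
    rw [← himg]
    exact (Set.ncard_image_of_injOn (hθinj.mono (fun z hz => hz.1))).symm
  -- pass to complements
  set A' := A \ orbit G x with hA'
  set B' := B \ orbit G y with hB'
  have hsplitA : ∀ H : Subgroup G, {z | z ∈ A' ∧ ∀ g ∈ H, g • z = z}
      = {z | z ∈ A ∧ ∀ g ∈ H, g • z = z} \ {z | z ∈ orbit G x ∧ ∀ g ∈ H, g • z = z} := by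
    intro H; ext z
    simp only [hA', Set.mem_setOf_eq, Set.mem_diff]
    tauto
  have hsplitB : ∀ H : Subgroup G, {z | z ∈ B' ∧ ∀ g ∈ H, g • z = z}
      = {z | z ∈ B ∧ ∀ g ∈ H, g • z = z} \ {z | z ∈ orbit G y ∧ ∀ g ∈ H, g • z = z} := by
    intro H; ext z
    simp only [hB', Set.mem_setOf_eq, Set.mem_diff]
    tauto
  have hfix' : ∀ H : Subgroup G, {z | z ∈ A' ∧ ∀ g ∈ H, g • z = z}.ncard
      = {z | z ∈ B' ∧ ∀ g ∈ H, g • z = z}.ncard := by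
    intro H
    rw [hsplitA H, hsplitB H,
      Set.ncard_diff (by intro z hz; exact ⟨hOxA hz.1, hz.2⟩) (Set.toFinite _),
      Set.ncard_diff (by intro z hz; exact ⟨hOyB hz.1, hz.2⟩) (Set.toFinite _),
      hfix H, horbfix H]
  have hA'inv : ∀ (g : G), ∀ z ∈ A', g • z ∈ A' := by
    intro g z hz
    refine ⟨hA g z hz.1, fun hmem => hz.2 ?_⟩
    obtain ⟨g', hg'⟩ := hmem
    change g' • x = g • z at hg'
    have : z = (g⁻¹ * g') • x := by rw [mul_smul, hg', inv_smul_smul]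
    exact this ▸ mem_orbit x (g⁻¹ * g')
  have hB'inv : ∀ (g : G), ∀ z ∈ B', g • z ∈ B' := by
    intro g z hz
    refine ⟨hB g z hz.1, fun hmem => hz.2 ?_⟩
    obtain ⟨g', hg'⟩ := hmem
    change g' • y = g • z at hg'
    have : z = (g⁻¹ * g') • y := by rw [mul_smul, hg', inv_smul_smul]
    exact this ▸ mem_orbit y (g⁻¹ * g')
  -- cardinality decreases
  have hxOx : x ∈ orbit G x := mem_orbit_self x
  have hlt : A'.ncard < n := by
    rw [hA', Set.ncard_diff hOxA (Set.toFinite _), hAn]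
    have h1 : 0 < (orbit G x).ncard :=
      (Set.ncard_pos (Set.toFinite _)).mpr ⟨x, hxOx⟩
    have h2 : 0 < n := by
      rw [← hAn, Set.ncard_pos (Set.toFinite _)]; exact hAne
    omega
  obtain ⟨f', hf'bij, hf'eq⟩ := ih A'.ncard hlt A' B' rfl hA'inv hB'inv hfix'
  -- combine
  refine ⟨fun z => if z ∈ orbit G x then θ z else f' z, ?_, ?_⟩
  · have hAdec : A = orbit G x ∪ A' := by
      rw [hA', Set.union_diff_cancel hOxA]
    have hBdec : B = orbit G y ∪ B' := by
      rw [hB', Set.union_diff_cancel hOyB]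
    constructor
    · -- MapsTo
      intro z hz
      by_cases hzo : z ∈ orbit G x
      · simp only [if_pos hzo]
        exact hOyB (hθbij.mapsTo hzo)
      · simp only [if_neg hzo]
        exact (hf'bij.mapsTo ⟨hz, hzo⟩).1
    constructor
    · -- InjOn
      intro z₁ hz₁ z₂ hz₂ heq
      by_cases h1 : z₁ ∈ orbit G x <;> by_cases h2 : z₂ ∈ orbit G x
      · simp only [if_pos h1, if_pos h2] at heq; exact hθinj h1 h2 heq
      · simp only [if_pos h1, if_neg h2] at heq
        exact absurd (heq ▸ hθbij.mapsTo h1) (hf'bij.mapsTo ⟨hz₂, h2⟩).2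
      · simp only [if_neg h1, if_pos h2] at heq
        exact absurd (heq.symm ▸ hθbij.mapsTo h2) (hf'bij.mapsTo ⟨hz₁, h1⟩).2
      · simp only [if_neg h1, if_neg h2] at heq
        exact hf'bij.injOn ⟨hz₁, h1⟩ ⟨hz₂, h2⟩ heq
    · -- SurjOn
      intro b hb
      by_cases hbo : b ∈ orbit G y
      · obtain ⟨z, hz, hzb⟩ := hθbij.surjOn hbo
        exact ⟨z, hOxA hz, by simp only [if_pos hz]; exact hzb⟩
      · obtain ⟨z, hz, hzb⟩ := hf'bij.surjOn ⟨hb, hbo⟩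
        exact ⟨z, hz.1, by simp only [if_neg hz.2]; exact hzb⟩
  · -- equivariance
    intro g z hz
    by_cases hzo : z ∈ orbit G x
    · have hgzo : g • z ∈ orbit G x := by
        rcases hzo with ⟨g', rfl⟩
        rw [← mul_smul]; exact mem_orbit x (g * g')
      simp only [if_pos hgzo, if_pos hzo]
      rcases hzo with ⟨g', rfl⟩
      rw [← mul_smul, hθ, hθ, mul_smul]
    · have hgzo : g • z ∉ orbit G x := by
        intro hmem
        obtain ⟨g', hg'⟩ := hmem
        change g' • x = g • z at hg'
        have : z = (g⁻¹ * g') • x := by rw [mul_smul, hg', inv_smul_smul]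
        exact hzo (this ▸ mem_orbit x (g⁻¹ * g'))
      simp only [if_neg hgzo, if_neg hzo]
      exact hf'eq g z ⟨hz, hzo⟩
end aux

private lemma exists_equivariant_equiv {G X Y : Type*} [Group G] [Finite G]
    [Finite X] [Finite Y] [MulAction G X] [MulAction G Y]
    (h : ∀ H : Subgroup G, {x : X | ∀ g ∈ H, g • x = x}.ncard
      = {y : Y | ∀ g ∈ H, g • y = y}.ncard) :
    ∃ e : X ≃ Y, ∀ (g : G) (x : X), e (g • x) = g • e x := by
  classical
  have hAinv : ∀ (g : G), ∀ z ∈ Set.range (Sum.inl : X → X ⊕ Y), g • z ∈ Set.range Sum.inl := by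
    rintro g z ⟨x, rfl⟩; exact ⟨g • x, (Sum.smul_inl g x).symm⟩
  have hBinv : ∀ (g : G), ∀ z ∈ Set.range (Sum.inr : Y → X ⊕ Y), g • z ∈ Set.range Sum.inr := by
    rintro g z ⟨y, rfl⟩; exact ⟨g • y, (Sum.smul_inr g y).symm⟩
  have hfix : ∀ H : Subgroup G,
      {z | z ∈ Set.range (Sum.inl : X → X ⊕ Y) ∧ ∀ g ∈ H, g • z = z}.ncard
        = {z | z ∈ Set.range (Sum.inr : Y → X ⊕ Y) ∧ ∀ g ∈ H, g • z = z}.ncard := by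
    intro H
    have e1 : {z | z ∈ Set.range (Sum.inl : X → X ⊕ Y) ∧ ∀ g ∈ H, g • z = z}
        = Sum.inl '' {x : X | ∀ g ∈ H, g • x = x} := by
      ext z
      constructor
      · rintro ⟨⟨x, rfl⟩, hfx⟩
        refine ⟨x, fun g hg => Sum.inl_injective (α := X) (β := Y) ?_, rfl⟩
        rw [← Sum.smul_inl]
        exact hfx g hg
      · rintro ⟨x, hx, rfl⟩
        refine ⟨⟨x, rfl⟩, fun g hg => ?_⟩
        rw [Sum.smul_inl, hx g hg]
    have e2 : {z | z ∈ Set.range (Sum.inr : Y → X ⊕ Y) ∧ ∀ g ∈ H, g • z = z}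
        = Sum.inr '' {y : Y | ∀ g ∈ H, g • y = y} := by
      ext z
      constructor
      · rintro ⟨⟨y, rfl⟩, hfx⟩
        refine ⟨y, fun g hg => Sum.inr_injective (α := X) (β := Y) ?_, rfl⟩
        rw [← Sum.smul_inr]
        exact hfx g hg
      · rintro ⟨y, hy, rfl⟩
        refine ⟨⟨y, rfl⟩, fun g hg => ?_⟩
        rw [Sum.smul_inr, hy g hg]
    rw [e1, e2, Set.ncard_image_of_injective _ Sum.inl_injective,
      Set.ncard_image_of_injective _ Sum.inr_injective]
    exact h H
  obtain ⟨f, hfbij, hfeq⟩ := GI_aux (Set.range (Sum.inl : X → X ⊕ Y)).ncard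
    (Set.range Sum.inl) (Set.range Sum.inr) rfl hAinv hBinv hfix
  have hf1 : ∀ x : X, ∃ y : Y, f (Sum.inl x) = Sum.inr y := by
    intro x
    obtain ⟨y, hy⟩ := hfbij.mapsTo ⟨x, rfl⟩
    exact ⟨y, hy.symm⟩
  choose e he using hf1
  have hinj : Function.Injective e := by
    intro x₁ x₂ hx
    have : f (Sum.inl x₁) = f (Sum.inl x₂) := by rw [he, he, hx]
    exact Sum.inl_injective (hfbij.injOn ⟨x₁, rfl⟩ ⟨x₂, rfl⟩ this)
  have hsurj : Function.Surjective e := by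
    intro y
    obtain ⟨z, ⟨x, rfl⟩, hz⟩ := hfbij.surjOn ⟨y, rfl⟩
    exact ⟨x, Sum.inr_injective (by rw [← he, hz])⟩
  refine ⟨Equiv.ofBijective e ⟨hinj, hsurj⟩, fun g x => ?_⟩
  have : f (g • Sum.inl x) = g • f (Sum.inl x) := hfeq g _ ⟨x, rfl⟩
  rw [Sum.smul_inl, he, he] at this
  rw [Sum.smul_inr] at this
  exact Sum.inr_injective this

private lemma exists_mul_eq_q_add_one (n M : ℕ) (hn : 0 < n) (hM : 0 < M)
    (h : Nat.Coprime n M) : ∃ m q : ℕ, n * m = q * M + 1 := by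
  rcases eq_or_lt_of_le (show 1 ≤ M from hM) with hM1 | hM2
  · exact ⟨1, n - 1, by subst hM1; omega⟩
  · haveI : NeZero M := ⟨by omega⟩
    set u := ZMod.unitOfCoprime n h
    set m := ((u⁻¹ : (ZMod M)ˣ) : ZMod M).val with hm
    have hcast : ((n * m : ℕ) : ZMod M) = 1 := by
      push_cast
      rw [hm, ZMod.natCast_val, ZMod.cast_id]
      have : (n : ZMod M) = (u : ZMod M) := (ZMod.coe_unitOfCoprime n h).symm
      rw [this, ← Units.val_mul, mul_inv_cancel, Units.val_one]
    have hmod : (n * m) % M = 1 := by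
      have := (ZMod.natCast_eq_natCast_iff (n * m) 1 M).mp (by rw [hcast, Nat.cast_one])
      have h2 : (n * m) % M = 1 % M := this
      rwa [Nat.mod_eq_of_lt hM2] at h2
    refine ⟨m, (n * m) / M, ?_⟩
    conv_lhs => rw [← Nat.div_add_mod (n * m) M]
    rw [hmod, mul_comm]

private lemma card_fixed_chars {T : Type*} [CommGroup T] [Fintype T]
    {W : Type*} [Group W] (φ : W →* MulAut T) (H : Subgroup W) [Fintype H]
    (hcop : Nat.Coprime (Fintype.card H) (Fintype.card T)) :
    {θ : T →* ℂ | ∀ w ∈ H, θ.comp (φ w : MulAut T).toMonoidHom = θ}.ncard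
      = {t : T | ∀ w ∈ H, φ w t = t}.ncard := by
  classical
  set n := Fintype.card H with hn
  set M := Fintype.card T with hM
  obtain ⟨m, q, hmq⟩ := exists_mul_eq_q_add_one n M Fintype.card_pos Fintype.card_pos hcop
  set F : Subgroup T :=
    { carrier := {t : T | ∀ w ∈ H, φ w t = t}
      one_mem' := fun w _ => map_one (φ w)
      mul_mem' := fun {a b} ha hb w hw => by rw [map_mul, ha w hw, hb w hw]
      inv_mem' := fun {a} ha w hw => by rw [map_inv, ha w hw] } with hF
  set N : T →* T := ∏ w : H, (φ (w : W)).toMonoidHom with hN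
  have hNapp : ∀ t : T, N t = ∏ w : H, φ (w : W) t := by
    intro t
    rw [hN, MonoidHom.finset_prod_apply]
    rfl
  have hNfix : ∀ (t : T) (w : W), w ∈ H → φ w (N t) = N t := by
    intro t w hw
    rw [hNapp, map_prod]
    calc ∏ h : H, φ w (φ (h : W) t)
        = ∏ h : H, φ (((⟨w, hw⟩ : H) * h : H) : W) t := by
          refine Finset.prod_congr rfl fun h _ => ?_
          rw [Subgroup.coe_mul, map_mul, MulAut.mul_apply]
      _ = ∏ h : H, φ (h : W) t :=
          Fintype.prod_equiv (Equiv.mulLeft (⟨w, hw⟩ : H)) _ _ (fun h => rfl)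
  have hNmem : ∀ t : T, N t ∈ F := fun t w hw => hNfix t w hw
  have hNofF : ∀ t ∈ F, N t = t ^ n := by
    intro t ht
    rw [hNapp]
    calc ∏ w : H, φ (w : W) t
        = ∏ _w : H, t := Finset.prod_congr rfl fun w _ => ht w w.2
      _ = t ^ n := by rw [Finset.prod_const, Finset.card_univ]
  have hNH : ∀ (t : T) (w : W), w ∈ H → N (φ w t) = N t := by
    intro t w hw
    rw [hNapp, hNapp]
    calc ∏ h : H, φ (h : W) (φ w t)
        = ∏ h : H, φ ((h * (⟨w, hw⟩ : H) : H) : W) t := by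
          refine Finset.prod_congr rfl fun h _ => ?_
          rw [Subgroup.coe_mul, map_mul, MulAut.mul_apply]
      _ = ∏ h : H, φ (h : W) t :=
          Fintype.prod_equiv (Equiv.mulRight (⟨w, hw⟩ : H)) _ _ (fun h => rfl)
  set E : T →* T := N ^ m with hE
  have hEapp : ∀ t, E t = (N t) ^ m := fun t => by rw [hE, MonoidHom.pow_apply]
  have hEmem : ∀ t, E t ∈ F := by
    intro t; rw [hEapp]; exact F.pow_mem (hNmem t) m
  have hEid : ∀ t ∈ F, E t = t := by
    intro t ht
    rw [hEapp, hNofF t ht, ← pow_mul, hmq, pow_add, pow_mul, hM, pow_card_eq_one,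
      one_mul, pow_one]
  have hEH : ∀ (t : T) (w : W), w ∈ H → E (φ w t) = E t := by
    intro t w hw; rw [hEapp, hEapp, hNH t w hw]
  -- the restriction map from fixed characters to characters of F
  set resmap : {θ : T →* ℂ // ∀ w ∈ H, θ.comp (φ w : MulAut T).toMonoidHom = θ}
      → (↥F →* ℂ) := fun θ => (θ : T →* ℂ).comp F.subtype with hres
  have hθE : ∀ (θ : T →* ℂ), (∀ w ∈ H, θ.comp (φ w : MulAut T).toMonoidHom = θ) →
      ∀ t, θ (E t) = θ t := by
    intro θ hθ t
    have hpt : ∀ w ∈ H, ∀ s, θ (φ w s) = θ s := fun w hw s => DFunLike.congr_fun (hθ w hw) s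
    have h1 : θ (N t) = θ t ^ n := by
      rw [hNapp, map_prod]
      calc ∏ h : H, θ (φ (h : W) t)
          = ∏ _h : H, θ t := Finset.prod_congr rfl fun h _ => hpt h h.2 t
        _ = θ t ^ n := by rw [Finset.prod_const, Finset.card_univ]
    have hcard : θ t ^ M = 1 := by rw [← map_pow, hM, pow_card_eq_one, map_one]
    rw [hEapp, map_pow, h1, ← pow_mul, hmq, pow_add, pow_mul, pow_right_comm, hcard,
      one_pow, one_mul, pow_one]
  have hinj : Function.Injective resmap := by
    rintro ⟨θ, hθ⟩ ⟨θ', hθ'⟩ h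
    ext1
    ext t
    have h1 := DFunLike.congr_fun h (⟨E t, hEmem t⟩ : F)
    simp only [hres, MonoidHom.comp_apply, Subgroup.coe_subtype] at h1
    calc θ t = θ (E t) := (hθE θ hθ t).symm
      _ = θ' (E t) := h1
      _ = θ' t := hθE θ' hθ' t
  have hsurj : Function.Surjective resmap := by
    intro ψ
    refine ⟨⟨ψ.comp (E.codRestrict F hEmem), ?_⟩, ?_⟩
    · intro w hw
      ext t
      simp only [MonoidHom.comp_apply, MonoidHom.codRestrict_apply]
      exact congrArg ψ (Subtype.ext (hEH t w hw))
    · ext ⟨t, ht⟩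
      simp only [hres, MonoidHom.comp_apply, Subgroup.coe_subtype, MonoidHom.codRestrict_apply]
      exact congrArg ψ (Subtype.ext (hEid t ht))
  have equ : (↥F →* ℂ) ≃ (↥F →* ℂˣ) :=
    { toFun := MonoidHom.toHomUnits
      invFun := fun ψ => (Units.coeHom ℂ).comp ψ
      left_inv := fun θ => MonoidHom.ext fun t => rfl
      right_inv := fun ψ => MonoidHom.ext fun t => Units.ext rfl }
  haveI : NeZero ((Monoid.exponent ↥F : ℂ)) :=
    ⟨Nat.cast_ne_zero.mpr Monoid.exponent_ne_zero_of_finite⟩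
  obtain ⟨me⟩ := CommGroup.monoidHom_mulEquiv_of_hasEnoughRootsOfUnity ↥F ℂ
  have h1 : {θ : T →* ℂ | ∀ w ∈ H, θ.comp (φ w : MulAut T).toMonoidHom = θ}.ncard
      = Nat.card ↥F := by
    rw [← Nat.card_coe_set_eq]
    exact (Nat.card_eq_of_bijective resmap ⟨hinj, hsurj⟩).trans
      ((Nat.card_congr equ).trans (Nat.card_congr me.toEquiv))
  rw [h1, ← Nat.card_coe_set_eq]
  rfl

private lemma finite_monoidHom_complex {T : Type*} [CommGroup T] [Fintype T] :
    Finite (T →* ℂ) := by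
  classical
  set M := Fintype.card T with hM
  have hmem : ∀ (θ : T →* ℂ) (t : T), θ.toHomUnits t ∈ rootsOfUnity M ℂ := by
    intro θ t
    rw [mem_rootsOfUnity]
    rw [← map_pow, pow_card_eq_one, map_one]
  refine Finite.of_injective
    (fun θ : T →* ℂ => fun t : T => (⟨θ.toHomUnits t, hmem θ t⟩ : rootsOfUnity M ℂ)) ?_
  intro θ θ' h
  ext t
  have h1 := congrFun h t
  have h2 : θ.toHomUnits t = θ'.toHomUnits t := Subtype.ext_iff.mp h1
  have := congrArg (Units.val) h2
  simpa using this

/-- Glauberman–Isaacs correspondence for coprime actions on abelian groups: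
if a finite group `W` of order prime to `ℓ` acts (via `φ`) on a finite abelian
`ℓ`-group `T`, there is a `W`-equivariant bijection `T ≃ Irr(T)` (with
`Irr(T) = Hom(T, ℂ)` since `T` is abelian, and `(w·θ)(t) = θ(t^w)`), sending
`1` to the trivial character; in particular corresponding elements have equal
stabilisers. -/
theorem stmt19 (ℓ : ℕ) [Fact ℓ.Prime]
    {T : Type*} [CommGroup T] [Fintype T] (hT : IsPGroup ℓ T)
    {W : Type*} [Group W] [Fintype W] (hW : ¬ ℓ ∣ Fintype.card W)
    (φ : W →* MulAut T) :
    ∃ f : T ≃ (T →* ℂ),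
      f 1 = 1 ∧
      (∀ (w : W) (t : T), f (φ w t) = (f t).comp (φ w⁻¹ : MulAut T).toMonoidHom) ∧
      (∀ (t : T) (w : W),
        (φ w t = t ↔ (f t).comp (φ w : MulAut T).toMonoidHom = f t)) := by
  classical
  haveI : Finite (T →* ℂ) := finite_monoidHom_complex
  letI actT : MulAction W T :=
    { smul := fun w t => φ w t
      one_smul := fun t => by show φ 1 t = t; rw [map_one, MulAut.one_apply]
      mul_smul := fun w w' t => by
        show φ (w * w') t = φ w (φ w' t)
        rw [map_mul, MulAut.mul_apply] }
  letI actD : MulAction W (T →* ℂ) :=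
    { smul := fun w θ => θ.comp (φ w⁻¹ : MulAut T).toMonoidHom
      one_smul := fun θ => by
        show θ.comp (φ (1 : W)⁻¹ : MulAut T).toMonoidHom = θ
        ext t
        show θ (φ (1 : W)⁻¹ t) = θ t
        rw [inv_one, map_one, MulAut.one_apply]
      mul_smul := fun w w' θ => by
        show θ.comp (φ (w * w')⁻¹ : MulAut T).toMonoidHom
          = (θ.comp (φ w'⁻¹ : MulAut T).toMonoidHom).comp (φ w⁻¹ : MulAut T).toMonoidHom
        ext t
        show θ (φ (w * w')⁻¹ t) = θ (φ w'⁻¹ (φ w⁻¹ t))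
        rw [mul_inv_rev, map_mul, MulAut.mul_apply] }
  -- coprimality
  have hp : ℓ.Prime := Fact.out
  obtain ⟨k, hk⟩ := IsPGroup.iff_card.mp hT
  have hcop : ∀ H : Subgroup W, ∀ _ : Fintype ↥H,
      Nat.Coprime (Fintype.card ↥H) (Fintype.card T) := by
    intro H _
    have hHdvd : Nat.card ↥H ∣ Nat.card W := Subgroup.card_subgroup_dvd_card H
    have hnd : ¬ ℓ ∣ Nat.card ↥H := by
      intro hdvd
      exact hW (by
        have := hdvd.trans hHdvd
        rwa [Nat.card_eq_fintype_card] at this)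
    have h1 : Nat.Coprime ℓ (Nat.card ↥H) := (Nat.Prime.coprime_iff_not_dvd hp).mpr hnd
    have h2 : Nat.Coprime (Nat.card ↥H) (ℓ ^ k) := (h1.symm).pow_right k
    rw [← hk] at h2
    rwa [Nat.card_eq_fintype_card, Nat.card_eq_fintype_card] at h2
  -- fixed point counts agree
  have hcards : ∀ H : Subgroup W,
      {x : T | ∀ g ∈ H, g • x = x}.ncard = {θ : T →* ℂ | ∀ g ∈ H, g • θ = θ}.ncard := by
    intro H
    haveI : Fintype ↥H := Fintype.ofFinite _
    have h2 : {θ : T →* ℂ | ∀ g ∈ H, g • θ = θ}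
        = {θ : T →* ℂ | ∀ w ∈ H, θ.comp (φ w : MulAut T).toMonoidHom = θ} := by
      ext θ
      constructor
      · intro h w hw
        have h3 := h w⁻¹ (inv_mem hw)
        change θ.comp (φ w⁻¹⁻¹ : MulAut T).toMonoidHom = θ at h3
        rwa [inv_inv] at h3
      · intro h g hg
        show θ.comp (φ g⁻¹ : MulAut T).toMonoidHom = θ
        exact h g⁻¹ (inv_mem hg)
    have h1 : {x : T | ∀ g ∈ H, g • x = x} = {t : T | ∀ w ∈ H, φ w t = t} := rfl
    rw [h1, h2]
    exact (card_fixed_chars φ H (hcop H _)).symm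
  obtain ⟨e, he⟩ := exists_equivariant_equiv (G := W) (X := T) (Y := T →* ℂ) hcards
  have he' : ∀ (w : W) (t : T), e (φ w t) = (e t).comp (φ w⁻¹ : MulAut T).toMonoidHom :=
    fun w t => he w t
  -- fix up the image of 1
  have hfix1 : ∀ w : W, (e 1).comp (φ w⁻¹ : MulAut T).toMonoidHom = e 1 := by
    intro w
    have h := he' w 1
    rw [map_one] at h
    exact h.symm
  have hfixtriv : ∀ w : W, ((1 : T →* ℂ)).comp (φ w⁻¹ : MulAut T).toMonoidHom = 1 :=
    fun w => MonoidHom.one_comp _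
  set σ : (T →* ℂ) ≃ (T →* ℂ) := Equiv.swap (e 1) 1 with hσ
  have hswap : ∀ (w : W) (θ : T →* ℂ),
      σ (θ.comp (φ w⁻¹ : MulAut T).toMonoidHom)
        = (σ θ).comp (φ w⁻¹ : MulAut T).toMonoidHom := by
    intro w θ
    rcases eq_or_ne θ (e 1) with rfl | h1
    · rw [hfix1 w, hσ, Equiv.swap_apply_left, hfixtriv w]
    rcases eq_or_ne θ 1 with rfl | h2
    · rw [hfixtriv w, hσ, Equiv.swap_apply_right, hfix1 w]
    have hact : ∀ (u : W) (θ' : T →* ℂ),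
        (θ'.comp (φ u⁻¹ : MulAut T).toMonoidHom).comp (φ u⁻¹⁻¹ : MulAut T).toMonoidHom = θ' := by
      intro u θ'
      have := (inv_smul_smul u θ' : u⁻¹ • (u • θ') = θ')
      exact this
    have hne1 : θ.comp (φ w⁻¹ : MulAut T).toMonoidHom ≠ e 1 := by
      intro h
      apply h1
      have := congrArg (fun ψ : T →* ℂ => ψ.comp (φ w⁻¹⁻¹ : MulAut T).toMonoidHom) h
      rw [hact w θ] at this
      rw [this]
      exact hfix1 w⁻¹
    have hne2 : θ.comp (φ w⁻¹ : MulAut T).toMonoidHom ≠ 1 := by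
      intro h
      apply h2
      have := congrArg (fun ψ : T →* ℂ => ψ.comp (φ w⁻¹⁻¹ : MulAut T).toMonoidHom) h
      rw [hact w θ] at this
      rw [this, MonoidHom.one_comp]
    rw [hσ, Equiv.swap_apply_of_ne_of_ne hne1 hne2, Equiv.swap_apply_of_ne_of_ne h1 h2]
  set f : T ≃ (T →* ℂ) := e.trans σ with hf
  have hfapp : ∀ t, f t = σ (e t) := fun t => rfl
  have hEq : ∀ (w : W) (t : T), f (φ w t) = (f t).comp (φ w⁻¹ : MulAut T).toMonoidHom := by
    intro w t
    rw [hfapp, hfapp, he' w t, hswap w (e t)]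
  have hiff : ∀ (w : W) (s : T), φ w⁻¹ s = s ↔ φ w s = s := by
    intro w s
    constructor
    · intro h
      conv_lhs => rw [← h]
      rw [← MulAut.mul_apply, ← map_mul, mul_inv_cancel, map_one, MulAut.one_apply]
    · intro h
      conv_lhs => rw [← h]
      rw [← MulAut.mul_apply, ← map_mul, inv_mul_cancel, map_one, MulAut.one_apply]
  refine ⟨f, ?_, hEq, ?_⟩
  · rw [hfapp, hσ]
    exact Equiv.swap_apply_left _ _
  · intro t w
    have key : f (φ w⁻¹ t) = (f t).comp (φ w : MulAut T).toMonoidHom := by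
      have h := hEq w⁻¹ t
      rwa [inv_inv] at h
    constructor
    · intro h
      rw [← key, (hiff w t).mpr h]
    · intro h
      have h2 : f (φ w⁻¹ t) = f t := key.trans h
      exact (hiff w t).mp (f.injective h2)
end
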